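/- arXiv:1303.3810 — 2 statements merged into one kernel-verified Lean document; each statement's English description precedes it below -/
import Mathlib

section
/- A compact KC-space (a space in which every compact subset is closed) that is the continuous image of a compact Hausdorff normal space is Hausdorff. -/
/-!
Since compact sets of `Y` are closed, `Y` is T₁ and `f`, mapping the compact space `X` into `Y`,
is a closed map. A closed continuous surjection carries normality of `X` over to `Y`: disjoint
closed sets of `Y` pull back to disjoint closed sets of `X`, and open neighbourhoods `U`, `V`
separating those push forward to the open sets `{y | f⁻¹{y} ⊆ U}`, `{y | f⁻¹{y} ⊆ V}`. A normal
T₁ space is Hausdorff.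
-/

open Set

theorem IsClosedMap.normalSpace {X Y : Type*} [TopologicalSpace X] [NormalSpace X]
    [TopologicalSpace Y] {f : X → Y} (hf : Continuous f) (hcl : IsClosedMap f)
    (hsurj : Function.Surjective f) : NormalSpace Y where
  normal C D hC hD hCD := by
    obtain ⟨U, V, hU, hV, hCU, hDV, hUV⟩ :=
      normal_separation (hC.preimage hf) (hD.preimage hf) (hCD.preimage f)
    refine ⟨kernImage f U, kernImage f V, isClosedMap_iff_kernImage.mp hcl hU,
      isClosedMap_iff_kernImage.mp hcl hV, subset_kernImage_iff.mpr hCU,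
      subset_kernImage_iff.mpr hDV, ?_⟩
    rw [disjoint_iff, ← Set.preimage_kernImage.u_inf, disjoint_iff.mp hUV, bot_eq_empty,
      kernImage_empty, hsurj.range_eq, compl_univ, bot_eq_empty]

theorem t1Space_of_isCompact_imp_isClosed {Y : Type*} [TopologicalSpace Y]
    (hY : ∀ K : Set Y, IsCompact K → IsClosed K) : T1Space Y :=
  ⟨fun y => hY {y} isCompact_singleton⟩

theorem Continuous.isClosedMap_of_isCompact_imp_isClosed {X Y : Type*} [TopologicalSpace X]
    [CompactSpace X] [TopologicalSpace Y] (hY : ∀ K : Set Y, IsCompact K → IsClosed K)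
    {f : X → Y} (hf : Continuous f) : IsClosedMap f :=
  fun _ hC => hY _ (hC.isCompact.image hf)

theorem t2_of_compact_kc_image_of_compact_t2_normal_general {X Y : Type*}
    [TopologicalSpace X] [CompactSpace X] [NormalSpace X]
    [TopologicalSpace Y] (hY : ∀ K : Set Y, IsCompact K → IsClosed K)
    (f : X → Y) (hf : Continuous f) (hsurj : Function.Surjective f) : T2Space Y := by
  have : T1Space Y := t1Space_of_isCompact_imp_isClosed hY
  have : NormalSpace Y := (hf.isClosedMap_of_isCompact_imp_isClosed hY).normalSpace hf hsurj
  infer_instance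

theorem t2_of_compact_kc_image_of_compact_t2_normal {X Y : Type*}
    [TopologicalSpace X] [CompactSpace X] [T2Space X] [NormalSpace X]
    [TopologicalSpace Y] [CompactSpace Y] (hY : ∀ K : Set Y, IsCompact K → IsClosed K)
    (f : X → Y) (hf : Continuous f) (hsurj : Function.Surjective f) : T2Space Y :=
  t2_of_compact_kc_image_of_compact_t2_normal_general hY f hf hsurj
end

section
/- Every compact countably infinite Hausdorff space is the continuous image of Cantor's ternary set: if X is compact Hausdorff with countably infinite underlying set, then there exists a continuous surjection from C onto X. -/
/-!
A countable compact Hausdorff space is totally separated (Urysohn functions would otherwise have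
a countable connected image containing `[0, 1]`), so one clopen set for each pair of distinct
points embeds it into the countable power `X × X → Bool` of `Bool`. It is therefore metrizable,
and the Hausdorff–Alexandroff theorem applies once the ternary set is identified with Mathlib's
`cantorSet ≃ₜ (ℕ → Bool)`.
-/

/-- Cantor's ternary set `C = { Σ_{n ≥ 1} ω_n / 3^n : ω_n ∈ {0, 2} }`, as a subset of `ℝ`
with the Euclidean (subspace) topology. -/
def cantorC : Set ℝ :=
  {x | ∃ ω : ℕ → ℝ, (∀ n, ω n = 0 ∨ ω n = 2) ∧ HasSum (fun n => ω n / 3 ^ (n + 1)) x}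

open Real Function TopologicalSpace

theorem cantorC_eq_cantorSet : cantorC = cantorSet := by
  rw [cantorSet_eq_zero_two_ofDigits]
  ext x
  have term (a : ℕ → Fin 3) : ofDigitsTerm a = fun n => (a n : ℝ) / 3 ^ (n + 1) := by
    ext n
    simp [ofDigitsTerm, div_eq_mul_inv]
  constructor
  · rintro ⟨ω, hω, hx⟩
    refine ⟨fun n => if ω n = 2 then 2 else 0, fun n => by dsimp only; split_ifs <;> decide, ?_⟩
    rw [ofDigits, term]
    convert hx.tsum_eq using 3 with n
    rcases hω n with h | h <;> simp [h]
  · rintro ⟨a, ha, rfl⟩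
    refine ⟨fun n => (a n : ℝ), fun n => ?_, ?_⟩
    · have := ha n
      dsimp only
      generalize a n = d at this ⊢
      fin_cases d <;> simp_all
    · simpa only [ofDigits, term] using (summable_ofDigitsTerm (digits := a)).hasSum

noncomputable def cantorCHomeomorphNatToBool : cantorC ≃ₜ (ℕ → Bool) :=
  (Homeomorph.setCongr cantorC_eq_cantorSet).trans cantorSetHomeomorphNatToBool

theorem TotallySeparatedSpace.exists_continuous_injective_pi_bool (X : Type*)
    [TopologicalSpace X] [TotallySeparatedSpace X] :
    ∃ F : X → (X × X → Bool), Continuous F ∧ Injective F := by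
  have separating (p : X × X) :
      ∃ U : Set X, IsClopen U ∧ (p.1 ≠ p.2 → p.1 ∈ U ∧ p.2 ∉ U) := by
    by_cases h : p.1 = p.2
    · exact ⟨∅, isClopen_empty, fun hne => absurd h hne⟩
    · obtain ⟨U, hU, h1, h2⟩ := exists_isClopen_of_totally_separated h
      exact ⟨U, hU, fun _ => ⟨h1, h2⟩⟩
  choose U hU hsep using separating
  refine ⟨fun x p => (U p).boolIndicator x,
    continuous_pi fun p => (continuous_boolIndicator_iff_isClopen _).mpr (hU p), ?_⟩
  intro x y hxy
  by_contra hne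
  obtain ⟨hx, hy⟩ := hsep (x, y) hne
  have := congrFun hxy (x, y)
  simp_all [Set.boolIndicator]

theorem metrizableSpace_of_compactSpace_of_countable (X : Type*) [TopologicalSpace X]
    [CompactSpace X] [T2Space X] [Countable X] : MetrizableSpace X := by
  obtain ⟨F, hFc, hFi⟩ := TotallySeparatedSpace.exists_continuous_injective_pi_bool X
  exact (hFc.isClosedEmbedding hFi).isEmbedding.metrizableSpace

theorem compact_countable_t2_image_of_cantor {X : Type*} [TopologicalSpace X]
    [CompactSpace X] [T2Space X] [Countable X] [Infinite X] :
    ∃ f : cantorC → X, Continuous f ∧ Function.Surjective f := by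
  have := metrizableSpace_of_compactSpace_of_countable X
  let := metrizableSpaceMetric X
  obtain ⟨f, hf, hsurj⟩ := exists_nat_bool_continuous_surjective_of_compact X
  exact ⟨f ∘ cantorCHomeomorphNatToBool, hf.comp cantorCHomeomorphNatToBool.continuous,
    hsurj.comp cantorCHomeomorphNatToBool.surjective⟩
end
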